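/- There exists a unique R-algebra automorphism σ of H(r,1,n) such that σ(T_0) = ζT_0 and σ(T_i) = T_i for all 1 ≤ i ≤ n−1, and it satisfies σ^p = id. -/

import Mathlib

/-!
The substitution `T₀ ↦ u T₀`, `Tᵢ ↦ Tᵢ` of the free algebra multiplies every defining relator
by a scalar: the quadratic, braid and commutation relators are homogeneous in `T₀`, and the
cyclotomic relator `∏ (T₀ - v_k)` is multiplied by `u ^ r` as soon as the parameters are
invariant under multiplication by `u`. Hence the substitution descends to an endomorphism `σ`
of `H(r,1,n)`. As `ζ ^ p = 1`, `σ ^ p` fixes the generators, so `σ ^ p = 1` and `σ` is a unit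
of the endomorphism monoid, i.e. an automorphism. Uniqueness holds because the `Tᵢ` generate.
-/

variable (R : Type*) [CommRing R]

/-- The `i`-th generator `T_i` of the free algebra on `T_0, …, T_{n-1}`
(or `0` if `i ≥ n`). -/
def fgen (n : ℕ) (i : ℕ) : FreeAlgebra R (Fin n) :=
  if h : i < n then FreeAlgebra.ι R (⟨i, h⟩ : Fin n) else 0

/-- Scalar as an element of the free algebra. -/
def fconst (n : ℕ) (c : R) : FreeAlgebra R (Fin n) :=
  algebraMap R (FreeAlgebra R (Fin n)) c

/-- The defining relations of the cyclotomic Hecke algebra `H(r,1,n)`: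
`rel a b` holds when `a` is one of the defining relators and `b = 0`. -/
def heckeRel (n r : ℕ) (q : R) (v : Fin r → R) :
    FreeAlgebra R (Fin n) → FreeAlgebra R (Fin n) → Prop :=
  fun a b => b = 0 ∧
    (a = (List.ofFn (fun k : Fin r => fgen R n 0 - fconst R n (v k))).prod ∨
     (∃ i : ℕ, 1 ≤ i ∧ i ≤ n - 1 ∧
        a = (fgen R n i - fconst R n q) * (fgen R n i + 1)) ∨
     a = fgen R n 0 * fgen R n 1 * fgen R n 0 * fgen R n 1 -
         fgen R n 1 * fgen R n 0 * fgen R n 1 * fgen R n 0 ∨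
     (∃ i : ℕ, 1 ≤ i ∧ i + 1 ≤ n - 1 ∧
        a = fgen R n i * fgen R n (i + 1) * fgen R n i -
            fgen R n (i + 1) * fgen R n i * fgen R n (i + 1)) ∨
     (∃ i j : ℕ, j ≤ n - 1 ∧ i + 2 ≤ j ∧
        a = fgen R n i * fgen R n j - fgen R n j * fgen R n i))

/-- The cyclotomic Hecke algebra `H(r,1,n)`: the quotient of the free algebra on
`T_0, …, T_{n-1}` by the two-sided ideal generated by the defining relators. -/
def Hecke (n r : ℕ) (q : R) (v : Fin r → R) : Type _ :=
  RingQuot (heckeRel R n r q v)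

noncomputable instance (n r : ℕ) (q : R) (v : Fin r → R) : Ring (Hecke R n r q v) :=
  inferInstanceAs (Ring (RingQuot (heckeRel R n r q v)))

noncomputable instance (n r : ℕ) (q : R) (v : Fin r → R) :
    Algebra R (Hecke R n r q v) :=
  inferInstanceAs (Algebra R (RingQuot (heckeRel R n r q v)))

/-- The generator `T_i` of `H(r,1,n)`. -/
noncomputable def Tgen (n r : ℕ) (q : R) (v : Fin r → R) (i : ℕ) : Hecke R n r q v :=
  RingQuot.mkAlgHom R (heckeRel R n r q v) (fgen R n i)

open Polynomial

section ScaledRoots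

variable {R}
variable {ι : Type*} [Fintype ι]

lemma prod_X_sub_C_mul_comp_C_mul_X (u : R) (w : ι → R) :
    (∏ k, (X - C (u * w k))).comp (C u * X) = C u ^ Fintype.card ι * ∏ k, (X - C (w k)) := by
  rw [prod_comp, ← Finset.card_univ, ← Finset.prod_const, ← Finset.prod_mul_distrib]
  refine Finset.prod_congr rfl fun k _ => ?_
  rw [sub_comp, X_comp, C_comp, C_mul]
  ring

lemma aeval_smul_prod_X_sub_C_mul {A : Type*} [Semiring A] [Algebra R A] (u : R) (x : A)
    (w : ι → R) :
    aeval (u • x) (∏ k, (X - C (u * w k))) =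
      u ^ Fintype.card ι • aeval x (∏ k, (X - C (w k))) := by
  have hx : aeval x (C u * X) = u • x := by rw [map_mul, aeval_C, aeval_X, Algebra.smul_def]
  rw [← hx, ← aeval_comp, prod_X_sub_C_mul_comp_C_mul_X, map_mul, map_pow, aeval_C,
    Algebra.smul_def, map_pow]

lemma list_prod_ofFn_sub_algebraMap {A : Type*} [Ring A] [Algebra R A] {r : ℕ} (x : A)
    (w : Fin r → R) :
    (List.ofFn fun k => x - algebraMap R A (w k)).prod = aeval x (∏ k, (X - C (w k))) := by
  rw [← List.prod_ofFn, map_list_prod, List.map_ofFn]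
  simp [Function.comp_def]

end ScaledRoots

section Scaling

variable {R} {n : ℕ}

noncomputable def freeScaleT0 (u : R) : FreeAlgebra R (Fin n) →ₐ[R] FreeAlgebra R (Fin n) :=
  FreeAlgebra.lift R fun i => (if (i : ℕ) = 0 then u else 1) • FreeAlgebra.ι R i

lemma freeScaleT0_fgen (u : R) (i : ℕ) :
    freeScaleT0 u (fgen R n i) = (if i = 0 then u else 1) • fgen R n i := by
  unfold fgen
  split_ifs <;> simp_all [freeScaleT0]

variable {r : ℕ} {q : R} {v : Fin r → R}

lemma freeScaleT0_relator_eq_smul {u : R}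
    (hu : ∏ k, (X - C (u * v k)) = ∏ k, (X - C (v k))) {a b : FreeAlgebra R (Fin n)}
    (ha : heckeRel R n r q v a b) : ∃ c : R, freeScaleT0 u a = c • a := by
  obtain ⟨-, ha⟩ := ha
  rcases ha with rfl | ⟨i, hi, -, rfl⟩ | rfl | ⟨i, hi, -, rfl⟩ | ⟨i, j, -, hij, rfl⟩
  · refine ⟨u ^ r, ?_⟩
    simp only [fconst, list_prod_ofFn_sub_algebraMap, ← aeval_algHom_apply, freeScaleT0_fgen,
      ↓reduceIte]
    conv_lhs => rw [← hu]
    rw [aeval_smul_prod_X_sub_C_mul, Fintype.card_fin]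
  · refine ⟨1, ?_⟩
    simp [freeScaleT0_fgen, fconst, show i ≠ 0 by omega]
  · refine ⟨u ^ 2, ?_⟩
    simp [freeScaleT0_fgen, smul_sub, smul_smul, pow_two]
  · refine ⟨1, ?_⟩
    simp [freeScaleT0_fgen, show i ≠ 0 by omega]
  · refine ⟨if i = 0 then u else 1, ?_⟩
    simp [freeScaleT0_fgen, smul_sub, show j ≠ 0 by omega]

namespace Hecke

noncomputable def mk : FreeAlgebra R (Fin n) →ₐ[R] Hecke R n r q v :=
  RingQuot.mkAlgHom R (heckeRel R n r q v)

lemma mk_fgen (i : ℕ) : mk (fgen R n i) = Tgen R n r q v i := rfl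

lemma mk_rel {a b : FreeAlgebra R (Fin n)} (h : heckeRel R n r q v a b) :
    (mk a : Hecke R n r q v) = mk b :=
  RingQuot.mkAlgHom_rel R h

lemma mk_surjective : Function.Surjective (mk : _ → Hecke R n r q v) :=
  RingQuot.mkAlgHom_surjective R _

lemma algHom_ext {A : Type*} [Semiring A] [Algebra R A] {f g : Hecke R n r q v →ₐ[R] A}
    (h : ∀ i < n, f (Tgen R n r q v i) = g (Tgen R n r q v i)) : f = g := by
  have hmk : f.comp mk = g.comp mk := FreeAlgebra.hom_ext <| funext fun i => by
    have hι : FreeAlgebra.ι R i = fgen R n i := by simp [fgen]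
    simpa only [Function.comp_apply, AlgHom.comp_apply, hι, mk_fgen] using h i i.isLt
  ext x
  obtain ⟨a, rfl⟩ := mk_surjective x
  exact AlgHom.congr_fun hmk a

noncomputable def scaleT0 (u : R) (hu : ∏ k, (X - C (u * v k)) = ∏ k, (X - C (v k))) :
    Hecke R n r q v →ₐ[R] Hecke R n r q v :=
  RingQuot.liftAlgHom R ⟨mk.comp (freeScaleT0 u), fun a b hab => by
    obtain ⟨c, hc⟩ := freeScaleT0_relator_eq_smul hu hab
    simp only [AlgHom.comp_apply, hc, map_smul, mk_rel hab, hab.1, map_zero, smul_zero]⟩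

lemma scaleT0_mk {u : R} (hu : ∏ k, (X - C (u * v k)) = ∏ k, (X - C (v k)))
    (a : FreeAlgebra R (Fin n)) : scaleT0 u hu (mk a : Hecke R n r q v) = mk (freeScaleT0 u a) :=
  RingQuot.liftAlgHom_mkAlgHom_apply R _ _ a

lemma scaleT0_Tgen {u : R} (hu : ∏ k, (X - C (u * v k)) = ∏ k, (X - C (v k))) (i : ℕ) :
    scaleT0 u hu (Tgen R n r q v i) = (if i = 0 then u else 1) • Tgen R n r q v i := by
  rw [← mk_fgen, scaleT0_mk, freeScaleT0_fgen, map_smul]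

lemma scaleT0_pow_Tgen {u : R} (hu : ∏ k, (X - C (u * v k)) = ∏ k, (X - C (v k)))
    (m i : ℕ) :
    (scaleT0 u hu ^ m) (Tgen R n r q v i) = (if i = 0 then u else 1) ^ m • Tgen R n r q v i := by
  induction m with
  | zero => simp
  | succ m ih => rw [pow_succ', AlgHom.mul_apply, ih, map_smul, scaleT0_Tgen, smul_smul, pow_succ]

lemma scaleT0_pow_eq_one {u : R} (hu : ∏ k, (X - C (u * v k)) = ∏ k, (X - C (v k)))
    {p : ℕ} (hp : u ^ p = 1) : scaleT0 u hu ^ p = (1 : Hecke R n r q v →ₐ[R] _) :=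
  algHom_ext fun i _ => by
    rw [scaleT0_pow_Tgen, AlgHom.one_apply]
    split_ifs <;> simp [hp]

end Hecke

end Scaling

theorem hecke_sigma_exists_unique
    (n r p : ℕ) (hp : 1 ≤ p)
    (q : R) (ζ : R) (hζ : ζ ^ p = 1)
    (v : Fin r → R)
    (hinv : ∏ k : Fin r, (Polynomial.X - Polynomial.C (ζ * v k))
          = ∏ k : Fin r, (Polynomial.X - Polynomial.C (v k))) :
    ∃ σ : Hecke R n r q v ≃ₐ[R] Hecke R n r q v,
      (σ (Tgen R n r q v 0) = ζ • Tgen R n r q v 0) ∧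
      (∀ i : ℕ, 1 ≤ i → i ≤ n - 1 → σ (Tgen R n r q v i) = Tgen R n r q v i) ∧
      σ ^ p = 1 ∧
      (∀ τ : Hecke R n r q v ≃ₐ[R] Hecke R n r q v,
        (τ (Tgen R n r q v 0) = ζ • Tgen R n r q v 0) →
        (∀ i : ℕ, 1 ≤ i → i ≤ n - 1 → τ (Tgen R n r q v i) = Tgen R n r q v i) →
        τ = σ) := by
  let σ₀ : (Hecke R n r q v →ₐ[R] Hecke R n r q v)ˣ :=
    Units.ofPowEqOne _ p (Hecke.scaleT0_pow_eq_one hinv hζ) (by omega)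
  have hσ : ∀ i, AlgEquiv.algHomUnitsEquiv R _ σ₀ (Tgen R n r q v i)
      = (if i = 0 then ζ else 1) • Tgen R n r q v i :=
    Hecke.scaleT0_Tgen hinv
  refine ⟨AlgEquiv.algHomUnitsEquiv R _ σ₀, by simpa using hσ 0,
    fun i hi _ => by simpa [show i ≠ 0 by omega] using hσ i, ?_, fun τ hτ₀ hτ => ?_⟩
  · rw [← map_pow, Units.pow_ofPowEqOne, map_one]
  · refine AlgEquiv.coe_toAlgHom_injective (Hecke.algHom_ext fun i hi => ?_)
    rcases Nat.eq_zero_or_pos i with rfl | hi₀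
    · simpa [hσ] using hτ₀
    · simpa [hσ, hi₀.ne'] using hτ i hi₀ (by omega)
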